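/- Let $E$ be a real inner product space of dimension $n+1$ (with $n \ge 1$), let $S \subseteq E$ be a linear subspace of dimension $n$, and let $u, v \in E$ be nonzero orthogonal vectors. Then: (1) there exists a unit vector $a \in S \cap \operatorname{span}\{u,v\}$; (2) any such unit vector $a$ satisfies $\langle u, a\rangle^2 + \langle v, a\rangle^2 \ge \min(\|u\|^2, \|v\|^2)$; and consequently (3) the orthogonal projection $P_S$ onto $S$ satisfies $\|P_S u\|^2 + \|P_S v\|^2 \ge \min(\|u\|^2, \|v\|^2)$. -/

import Mathlib

open RealInnerProductSpace

theorem projection_lower_bound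
    {E : Type*} [NormedAddCommGroup E] [InnerProductSpace ℝ E]
    [FiniteDimensional ℝ E] (n : ℕ) (hn : 1 ≤ n)
    (hdim : Module.finrank ℝ E = n + 1)
    (S : Submodule ℝ E) (hS : Module.finrank ℝ S = n)
    (u v : E) (hu : u ≠ 0) (hv : v ≠ 0) (huv : ⟪u, v⟫ = 0) :
    (∃ a : E, a ∈ S ⊓ Submodule.span ℝ {u, v} ∧ ‖a‖ = 1) ∧
    (∀ a : E, a ∈ S ⊓ Submodule.span ℝ {u, v} → ‖a‖ = 1 →
      min (‖u‖ ^ 2) (‖v‖ ^ 2) ≤ ⟪u, a⟫ ^ 2 + ⟪v, a⟫ ^ 2) ∧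
    min (‖u‖ ^ 2) (‖v‖ ^ 2) ≤
      ‖(S.orthogonalProjectionOnto u : E)‖ ^ 2 + ‖(S.orthogonalProjectionOnto v : E)‖ ^ 2 := by
  set W := Submodule.span ℝ {u, v} with hW
  have hupos : (0:ℝ) < ‖u‖ ^ 2 := by
    have := norm_pos_iff.mpr hu; positivity
  have hvpos : (0:ℝ) < ‖v‖ ^ 2 := by
    have := norm_pos_iff.mpr hv; positivity
  have hvu : ⟪v, u⟫ = 0 := by rw [real_inner_comm]; exact huv
  -- linear independence
  have li : LinearIndependent ℝ ![u, v] := by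
    rw [LinearIndependent.pair_iff]
    intro s t h
    have h1 : ⟪u, s • u + t • v⟫ = 0 := by rw [h, inner_zero_right]
    have h2 : ⟪v, s • u + t • v⟫ = 0 := by rw [h, inner_zero_right]
    rw [inner_add_right, real_inner_smul_right, real_inner_smul_right, huv,
      real_inner_self_eq_norm_sq] at h1
    rw [inner_add_right, real_inner_smul_right, real_inner_smul_right,
      hvu, real_inner_self_eq_norm_sq] at h2
    constructor
    · nlinarith
    · nlinarith
  have hWrank : Module.finrank ℝ W = 2 := by
    have hrange : Set.range ![u, v] = {u, v} := by
      ext y; simp [Fin.exists_fin_two, or_comm]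
    have : W = Submodule.span ℝ (Set.range ![u, v]) := by rw [hrange]
    rw [this, finrank_span_eq_card li]
    simp
  -- existence
  have hinf : 0 < Module.finrank ℝ (S ⊓ W : Submodule ℝ E) := by
    have h1 := Submodule.finrank_sup_add_finrank_inf_eq S W
    have h2 : Module.finrank ℝ (S ⊔ W : Submodule ℝ E) ≤ n + 1 := by
      rw [← hdim]; exact Submodule.finrank_le _
    omega
  have : Nontrivial (S ⊓ W : Submodule ℝ E) := (Module.finrank_pos_iff (R := ℝ)).mp hinf
  obtain ⟨⟨x, hx⟩, hxne⟩ := exists_ne (0 : (S ⊓ W : Submodule ℝ E))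
  have hx0 : x ≠ 0 := by
    intro h; apply hxne; ext; simpa using h
  have key : ∀ a : E, a ∈ S ⊓ W → ‖a‖ = 1 →
      min (‖u‖ ^ 2) (‖v‖ ^ 2) ≤ ⟪u, a⟫ ^ 2 + ⟪v, a⟫ ^ 2 := by
    intro a ha hna
    obtain ⟨c, d, hcd⟩ := Submodule.mem_span_pair.mp ha.2
    have hua : ⟪u, a⟫ = c * ‖u‖ ^ 2 := by
      rw [← hcd, inner_add_right, real_inner_smul_right, real_inner_smul_right,
        huv, real_inner_self_eq_norm_sq]; ring
    have hva : ⟪v, a⟫ = d * ‖v‖ ^ 2 := by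
      rw [← hcd, inner_add_right, real_inner_smul_right, real_inner_smul_right,
        hvu, real_inner_self_eq_norm_sq]; ring
    have hnorm : c ^ 2 * ‖u‖ ^ 2 + d ^ 2 * ‖v‖ ^ 2 = 1 := by
      have h0 : ⟪c • u + d • v, c • u + d • v⟫ = c ^ 2 * ‖u‖ ^ 2 + d ^ 2 * ‖v‖ ^ 2 := by
        simp only [inner_add_left, inner_add_right, real_inner_smul_left,
          real_inner_smul_right, huv, hvu, real_inner_self_eq_norm_sq]
        rw [norm_smul, norm_smul, mul_pow, mul_pow]
        simp only [Real.norm_eq_abs, sq_abs]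
        ring
      rw [hcd, real_inner_self_eq_norm_sq, hna] at h0
      linarith [h0]
    rw [hua, hva]
    rcases le_total (‖u‖ ^ 2) (‖v‖ ^ 2) with h | h
    · rw [min_eq_left h]
      have e : ‖u‖ ^ 2 * (c ^ 2 * ‖u‖ ^ 2 + d ^ 2 * ‖v‖ ^ 2) = ‖u‖ ^ 2 := by
        rw [hnorm, mul_one]
      nlinarith [mul_nonneg (mul_nonneg (sq_nonneg d) hvpos.le) (sub_nonneg.mpr h), e]
    · rw [min_eq_right h]
      have e : ‖v‖ ^ 2 * (c ^ 2 * ‖u‖ ^ 2 + d ^ 2 * ‖v‖ ^ 2) = ‖v‖ ^ 2 := by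
        rw [hnorm, mul_one]
      nlinarith [mul_nonneg (mul_nonneg (sq_nonneg c) hupos.le) (sub_nonneg.mpr h), e]
  refine ⟨⟨‖x‖⁻¹ • x, ?_, ?_⟩, key, ?_⟩
  · exact Submodule.smul_mem _ _ hx
  · rw [norm_smul, norm_inv, norm_norm, inv_mul_cancel₀ (norm_ne_zero_iff.mpr hx0)]
  · -- part 3
    obtain ⟨a, haS, hna⟩ : ∃ a : E, a ∈ S ⊓ W ∧ ‖a‖ = 1 :=
      ⟨‖x‖⁻¹ • x, Submodule.smul_mem _ _ hx,
        by rw [norm_smul, norm_inv, norm_norm, inv_mul_cancel₀ (norm_ne_zero_iff.mpr hx0)]⟩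
    have haS' : a ∈ S := haS.1
    have hb := key a haS hna
    have proj_bound : ∀ w : E, ⟪w, a⟫ ^ 2 ≤ ‖(S.orthogonalProjectionOnto w : E)‖ ^ 2 := by
      intro w
      have h1 : ⟪w - (S.orthogonalProjectionOnto w : E), a⟫ = 0 :=
        S.starProjection_inner_eq_zero w a haS'
      have h2 : ⟪w, a⟫ = ⟪(S.orthogonalProjectionOnto w : E), a⟫ := by
        have := inner_sub_left (𝕜 := ℝ) w (S.orthogonalProjectionOnto w : E) a
        rw [h1] at this; linarith
      rw [h2]
      have h3 := abs_real_inner_le_norm (S.orthogonalProjectionOnto w : E) a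
      rw [hna, mul_one] at h3
      calc ⟪(S.orthogonalProjectionOnto w : E), a⟫ ^ 2
          ≤ |⟪(S.orthogonalProjectionOnto w : E), a⟫| ^ 2 := by rw [sq_abs]
        _ ≤ ‖(S.orthogonalProjectionOnto w : E)‖ ^ 2 := by
            apply pow_le_pow_left₀ (abs_nonneg _) h3 2
    have := proj_bound u
    have := proj_bound v
    linarith
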